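/- (Quantiles at vanishing truncation levels converge to the endpoints of the support.) Let g₀ be a log-concave probability density on ℝ with distribution function G₀, and define G₀⁻¹(1) = sup{x : G₀(x) < 1} ∈ (−∞, +∞] and G₀⁻¹(0) = inf{x : G₀(x) > 0} ∈ [−∞, +∞). Let (h_n) be probability densities on ℝ with distribution functions H_n such that sup_x |H_n(x) − G₀(x)| → 0, and let η_n ∈ (0, 1/2) with η_n → 0 and √2·H(h_n, g₀) ≤ η_n/2 for every n, where H denotes the Hellinger distance. Then H_n⁻¹(1−η_n) → G₀⁻¹(1) and H_n⁻¹(η_n) → G₀⁻¹(0), the convergences being in the extended real line (in particular H_n⁻¹(1−η_n) → +∞ when G₀⁻¹(1) = +∞, and H_n⁻¹(η_n) → −∞ when G₀⁻¹(0) = −∞). -/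

import Mathlib

open MeasureTheory Filter

noncomputable section

def IsProbDensity (f : ℝ → ℝ) : Prop :=
  (∀ x, 0 ≤ f x) ∧ Integrable f ∧ ∫ x, f x = 1

def IsLogConcave (f : ℝ → ℝ) : Prop :=
  ∀ x y a b : ℝ, 0 ≤ a → 0 ≤ b → a + b = 1 →
    f x ^ a * f y ^ b ≤ f (a * x + b * y)

def hellingerDist (f g : ℝ → ℝ) : ℝ :=
  Real.sqrt ((1 / 2) * ∫ x, (Real.sqrt (f x) - Real.sqrt (g x)) ^ 2)

def cdfOf (f : ℝ → ℝ) (x : ℝ) : ℝ := ∫ t in Set.Iic x, f t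

def quantile (F : ℝ → ℝ) (t : ℝ) : ℝ := sInf {x | t ≤ F x}

open Topology

/-! The Kolmogorov distance between `H_n` and `G₀` is at most the total variation distance, which
Cauchy–Schwarz bounds by `√2·H(h_n, g₀) ≤ η_n/2`.  So if `G₀(x) < 1` then `H_n(x) < 1 − η_n` once
`η_n` is small, giving `x ≤ H_n⁻¹(1 − η_n)`; and if `G₀(y) = 1` then `H_n(y) ≥ 1 − η_n/2`, giving
`H_n⁻¹(1 − η_n) ≤ y` for every `n`.  These two facts pin the limit to `sup {x : G₀(x) < 1}`, and
the lower end is symmetric. -/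

section Quantile

variable {F : ℝ → ℝ} {t x : ℝ}

lemma quantile_le_of_le (hF : Monotone F) (hlow : ∃ x₀, F x₀ < t) (hx : t ≤ F x) :
    quantile F t ≤ x := by
  obtain ⟨x₀, hx₀⟩ := hlow
  refine csInf_le ⟨x₀, fun y hy => le_of_not_gt fun hyx => ?_⟩ hx
  exact (hy.trans (hF hyx.le)).not_gt hx₀

lemma le_quantile_of_lt (hF : Monotone F) (hhigh : ∃ y, t ≤ F y) (hx : F x < t) :
    x ≤ quantile F t :=
  le_csInf hhigh fun _ hy => le_of_not_gt fun hyx => (hy.trans (hF hyx.le)).not_gt hx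

end Quantile

section Cdf

lemma tendsto_cdfOf_atBot (f : ℝ → ℝ) : Tendsto (cdfOf f) atBot (𝓝 0) :=
  tendsto_integral_Iic_zero tendsto_id

lemma exists_cdfOf_lt (f : ℝ → ℝ) {t : ℝ} (ht : 0 < t) : ∃ x, cdfOf f x < t :=
  ((tendsto_cdfOf_atBot f).eventually (eventually_lt_nhds ht)).exists

lemma tendsto_cdfOf_atTop {f : ℝ → ℝ} (hf : Integrable f) :
    Tendsto (cdfOf f) atTop (𝓝 (∫ x, f x)) :=
  (aecover_Iic tendsto_id).integral_tendsto_of_countably_generated hf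

variable {f : ℝ → ℝ}

lemma monotone_cdfOf (hf : IsProbDensity f) : Monotone (cdfOf f) := fun _ _ hxy =>
  setIntegral_mono_set hf.2.1.integrableOn (ae_of_all _ hf.1)
    (Set.Iic_subset_Iic.2 hxy).eventuallyLE

lemma cdfOf_nonneg (hf : IsProbDensity f) (x : ℝ) : 0 ≤ cdfOf f x :=
  setIntegral_nonneg measurableSet_Iic fun t _ => hf.1 t

lemma cdfOf_le_one (hf : IsProbDensity f) (x : ℝ) : cdfOf f x ≤ 1 :=
  hf.2.2 ▸ setIntegral_le_integral hf.2.1 (ae_of_all _ hf.1)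

lemma exists_le_cdfOf (hf : IsProbDensity f) {t : ℝ} (ht : t < 1) : ∃ x, t ≤ cdfOf f x :=
  (((tendsto_cdfOf_atTop hf.2.1).eventually (eventually_gt_nhds (hf.2.2 ▸ ht))).exists).imp
    fun _ => le_of_lt

end Cdf

section Integral

variable {α : Type*} [MeasurableSpace α] {μ : Measure α}

lemma abs_setIntegral_sub_le_half_integral_abs_sub {f g : α → ℝ} (hf : Integrable f μ)
    (hg : Integrable g μ) (hfg : ∫ x, f x ∂μ = ∫ x, g x ∂μ) {s : Set α} (hs : MeasurableSet s) :
    |∫ x in s, (f x - g x) ∂μ| ≤ (1 / 2) * ∫ x, |f x - g x| ∂μ := by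
  have hfg_int : Integrable (fun x => f x - g x) μ := hf.sub hg
  have hcompl : ∫ x in sᶜ, (f x - g x) ∂μ = -∫ x in s, (f x - g x) ∂μ := by
    have := integral_add_compl hs hfg_int
    rw [integral_sub hf hg, hfg, sub_self] at this
    linarith
  have hs_le : |∫ x in s, (f x - g x) ∂μ| ≤ ∫ x in s, |f x - g x| ∂μ :=
    abs_integral_le_integral_abs
  have hsc_le : |∫ x in sᶜ, (f x - g x) ∂μ| ≤ ∫ x in sᶜ, |f x - g x| ∂μ :=
    abs_integral_le_integral_abs
  rw [hcompl, abs_neg] at hsc_le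
  linarith [integral_add_compl hs hfg_int.abs]

lemma memLp_two_sqrt {f : α → ℝ} (hf0 : ∀ x, 0 ≤ f x) (hf : Integrable f μ) :
    MemLp (fun x => √(f x)) 2 μ := by
  refine (memLp_two_iff_integrable_sq
    (Real.continuous_sqrt.comp_aestronglyMeasurable hf.aestronglyMeasurable)).2 ?_
  simpa only [Real.sq_sqrt (hf0 _)] using hf

lemma integral_abs_mul_abs_le {u v : α → ℝ} (hu : MemLp u 2 μ) (hv : MemLp v 2 μ) :
    ∫ x, |u x| * |v x| ∂μ ≤ √(∫ x, u x ^ 2 ∂μ) * √(∫ x, v x ^ 2 ∂μ) := by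
  have := integral_mul_norm_le_Lp_mul_Lq Real.HolderConjugate.two_two
    (by rwa [ENNReal.ofReal_ofNat] : MemLp u (ENNReal.ofReal 2) μ)
    (by rwa [ENNReal.ofReal_ofNat] : MemLp v (ENNReal.ofReal 2) μ)
  simpa only [Real.norm_eq_abs, Real.rpow_two, sq_abs, ← Real.sqrt_eq_rpow] using this

lemma integral_abs_sub_le_sqrt_mul_sqrt {f g : α → ℝ} (hf0 : ∀ x, 0 ≤ f x) (hg0 : ∀ x, 0 ≤ g x)
    (hf : Integrable f μ) (hg : Integrable g μ) :
    ∫ x, |f x - g x| ∂μ ≤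
      √(∫ x, (√(f x) - √(g x)) ^ 2 ∂μ) * √(∫ x, (√(f x) + √(g x)) ^ 2 ∂μ) := by
  have hf2 := memLp_two_sqrt hf0 hf
  have hg2 := memLp_two_sqrt hg0 hg
  have hfactor : ∀ x, |f x - g x| = |√(f x) - √(g x)| * |√(f x) + √(g x)| := fun x => by
    rw [← abs_mul, mul_comm, ← sq_sub_sq, Real.sq_sqrt (hf0 x), Real.sq_sqrt (hg0 x)]
  simpa only [hfactor, Pi.sub_apply, Pi.add_apply] using
    integral_abs_mul_abs_le (hf2.sub hg2) (hf2.add hg2)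

end Integral

lemma integral_sqrt_add_sqrt_sq_le_four {f g : ℝ → ℝ} (hf : IsProbDensity f)
    (hg : IsProbDensity g) : ∫ x, (√(f x) + √(g x)) ^ 2 ≤ 4 := by
  have hbound : ∀ x, (√(f x) + √(g x)) ^ 2 ≤ 2 * f x + 2 * g x := fun x => by
    nlinarith [Real.sq_sqrt (hf.1 x), Real.sq_sqrt (hg.1 x), sq_nonneg (√(f x) - √(g x))]
  have hsq := ((memLp_two_sqrt hf.1 hf.2.1).add (memLp_two_sqrt hg.1 hg.2.1)).integrable_sq
  calc ∫ x, (√(f x) + √(g x)) ^ 2 ≤ ∫ x, (2 * f x + 2 * g x) :=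
        integral_mono hsq ((hf.2.1.const_mul 2).add (hg.2.1.const_mul 2)) hbound
    _ = 4 := by
        rw [integral_add (hf.2.1.const_mul 2) (hg.2.1.const_mul 2), integral_const_mul,
          integral_const_mul, hf.2.2, hg.2.2]
        norm_num

lemma sqrt_two_mul_hellingerDist (f g : ℝ → ℝ) :
    √2 * hellingerDist f g = √(∫ x, (√(f x) - √(g x)) ^ 2) := by
  rw [hellingerDist, ← Real.sqrt_mul zero_le_two, ← mul_assoc]
  norm_num

lemma integral_abs_sub_le_hellingerDist {f g : ℝ → ℝ} (hf : IsProbDensity f)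
    (hg : IsProbDensity g) : ∫ x, |f x - g x| ≤ 2 * (√2 * hellingerDist f g) := by
  have hsum : √(∫ x, (√(f x) + √(g x)) ^ 2) ≤ 2 := by
    rw [show (2 : ℝ) = √4 by rw [show (4 : ℝ) = 2 ^ 2 by norm_num, Real.sqrt_sq zero_le_two]]
    exact Real.sqrt_le_sqrt (integral_sqrt_add_sqrt_sq_le_four hf hg)
  calc ∫ x, |f x - g x|
      ≤ √(∫ x, (√(f x) - √(g x)) ^ 2) * √(∫ x, (√(f x) + √(g x)) ^ 2) :=
        integral_abs_sub_le_sqrt_mul_sqrt hf.1 hg.1 hf.2.1 hg.2.1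
    _ ≤ √(∫ x, (√(f x) - √(g x)) ^ 2) * 2 := by gcongr
    _ = 2 * (√2 * hellingerDist f g) := by rw [sqrt_two_mul_hellingerDist, mul_comm]

lemma abs_cdfOf_sub_cdfOf_le {f g : ℝ → ℝ} (hf : IsProbDensity f) (hg : IsProbDensity g)
    (x : ℝ) : |cdfOf f x - cdfOf g x| ≤ √2 * hellingerDist f g := by
  have hdiff : cdfOf f x - cdfOf g x = ∫ t in Set.Iic x, (f t - g t) :=
    (integral_sub hf.2.1.integrableOn hg.2.1.integrableOn).symm
  rw [hdiff]
  have := abs_setIntegral_sub_le_half_integral_abs_sub hf.2.1 hg.2.1 (hf.2.2.trans hg.2.2.symm)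
    (measurableSet_Iic (a := x))
  linarith [integral_abs_sub_le_hellingerDist hf hg]

section EReal

variable {ι : Type*} {l : Filter ι} {q : ι → ℝ} {T : Set ℝ}

lemma tendsto_coe_sSup_image (hlow : ∀ x ∈ T, ∀ᶠ i in l, x ≤ q i)
    (hup : ∀ y ∉ T, ∀ᶠ i in l, q i ≤ y) :
    Tendsto (fun i => (q i : EReal)) l (𝓝 (sSup (Real.toEReal '' T))) := by
  refine tendsto_order.2 ⟨fun a ha => ?_, fun a ha => ?_⟩
  · obtain ⟨_, ⟨x, hxT, rfl⟩, hax⟩ := lt_sSup_iff.1 ha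
    filter_upwards [hlow x hxT] with i hi
    exact hax.trans_le (EReal.coe_le_coe_iff.2 hi)
  · obtain ⟨y, hSy, hya⟩ := EReal.lt_iff_exists_real_btwn.1 ha
    have hyT : y ∉ T := fun hy => (le_sSup (Set.mem_image_of_mem _ hy)).not_gt hSy
    filter_upwards [hup y hyT] with i hi
    exact (EReal.coe_le_coe_iff.2 hi).trans_lt hya

lemma tendsto_coe_sInf_image (hup : ∀ x ∈ T, ∀ᶠ i in l, q i ≤ x)
    (hlow : ∀ y ∉ T, ∀ᶠ i in l, y ≤ q i) :
    Tendsto (fun i => (q i : EReal)) l (𝓝 (sInf (Real.toEReal '' T))) := by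
  refine tendsto_order.2 ⟨fun a ha => ?_, fun a ha => ?_⟩
  · obtain ⟨y, hay, hyS⟩ := EReal.lt_iff_exists_real_btwn.1 ha
    have hyT : y ∉ T := fun hy => (sInf_le (Set.mem_image_of_mem _ hy)).not_gt hyS
    filter_upwards [hlow y hyT] with i hi
    exact hay.trans_le (EReal.coe_le_coe_iff.2 hi)
  · obtain ⟨_, ⟨x, hxT, rfl⟩, hxa⟩ := sInf_lt_iff.1 ha
    filter_upwards [hup x hxT] with i hi
    exact (EReal.coe_le_coe_iff.2 hi).trans_lt hxa

end EReal

section Truncation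

variable {ι : Type*} {l : Filter ι} {g : ℝ → ℝ} {h : ι → ℝ → ℝ} {η : ι → ℝ}

lemma tendsto_quantile_one_sub (hg : IsProbDensity g) (hh : ∀ i, IsProbDensity (h i))
    (hη : ∀ i, 0 < η i ∧ η i < 1) (hη0 : Tendsto η l (𝓝 0))
    (hclose : ∀ i x, |cdfOf (h i) x - cdfOf g x| ≤ η i / 2) :
    Tendsto (fun i => (quantile (cdfOf (h i)) (1 - η i) : EReal)) l
      (𝓝 (sSup (Real.toEReal '' {x | cdfOf g x < 1}))) := by
  refine tendsto_coe_sSup_image (fun x (hx : cdfOf g x < 1) => ?_)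
    (fun y hy => Eventually.of_forall fun i => ?_)
  · have hgap : 0 < (1 - cdfOf g x) * (2 / 3) := by linarith
    filter_upwards [hη0.eventually (eventually_lt_nhds hgap)] with i hi
    refine le_quantile_of_lt (monotone_cdfOf (hh i)) (exists_le_cdfOf (hh i) ?_) ?_
    · linarith [hη i]
    · linarith [(abs_le.1 (hclose i x)).2]
  · have hy1 : cdfOf g y = 1 := le_antisymm (cdfOf_le_one hg y) (not_lt.1 hy)
    refine quantile_le_of_le (monotone_cdfOf (hh i)) (exists_cdfOf_lt (h i) ?_) ?_
    · linarith [hη i]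
    · linarith [(abs_le.1 (hclose i y)).1, hη i]

lemma tendsto_quantile (hg : IsProbDensity g) (hh : ∀ i, IsProbDensity (h i))
    (hη : ∀ i, 0 < η i ∧ η i < 1) (hη0 : Tendsto η l (𝓝 0))
    (hclose : ∀ i x, |cdfOf (h i) x - cdfOf g x| ≤ η i / 2) :
    Tendsto (fun i => (quantile (cdfOf (h i)) (η i) : EReal)) l
      (𝓝 (sInf (Real.toEReal '' {x | 0 < cdfOf g x}))) := by
  refine tendsto_coe_sInf_image (fun x (hx : 0 < cdfOf g x) => ?_)
    (fun y hy => Eventually.of_forall fun i => ?_)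
  · have hgap : 0 < cdfOf g x * (2 / 3) := by linarith
    filter_upwards [hη0.eventually (eventually_lt_nhds hgap)] with i hi
    refine quantile_le_of_le (monotone_cdfOf (hh i)) (exists_cdfOf_lt (h i) (hη i).1) ?_
    linarith [(abs_le.1 (hclose i x)).1]
  · have hy0 : cdfOf g y = 0 := le_antisymm (not_lt.1 hy) (cdfOf_nonneg hg y)
    refine le_quantile_of_lt (monotone_cdfOf (hh i)) (exists_le_cdfOf (hh i) (hη i).2) ?_
    linarith [(abs_le.1 (hclose i y)).2, hη i]

end Truncation

theorem truncation_quantiles_tendsto_support_endpoints_general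
    (g₀ : ℝ → ℝ) (hg₀ : IsProbDensity g₀)
    (h : ℕ → ℝ → ℝ) (hh : ∀ n, IsProbDensity (h n))
    (η : ℕ → ℝ) (hη : ∀ n, 0 < η n ∧ η n < 1 / 2) (hη0 : Tendsto η atTop (nhds 0))
    (hhell : ∀ n, Real.sqrt 2 * hellingerDist (h n) g₀ ≤ η n / 2) :
    Tendsto (fun n => ((quantile (cdfOf (h n)) (1 - η n) : ℝ) : EReal)) atTop
        (nhds (sSup (Real.toEReal '' {x : ℝ | cdfOf g₀ x < 1}))) ∧
      Tendsto (fun n => ((quantile (cdfOf (h n)) (η n) : ℝ) : EReal)) atTop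
        (nhds (sInf (Real.toEReal '' {x : ℝ | 0 < cdfOf g₀ x}))) := by
  have hclose : ∀ n x, |cdfOf (h n) x - cdfOf g₀ x| ≤ η n / 2 := fun n x =>
    (abs_cdfOf_sub_cdfOf_le (hh n) hg₀ x).trans (hhell n)
  have hη' : ∀ n, 0 < η n ∧ η n < 1 := fun n => ⟨(hη n).1, by linarith [hη n]⟩
  exact ⟨tendsto_quantile_one_sub hg₀ hh hη' hη0 hclose, tendsto_quantile hg₀ hh hη' hη0 hclose⟩

/-- **Quantiles at vanishing truncation levels converge to the endpoints of the support.**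
Let `g₀` be log-concave with distribution function `G₀`; put `G₀⁻¹(1) = sup{x : G₀(x) < 1}`
and `G₀⁻¹(0) = inf{x : G₀(x) > 0}` (extended reals).  If `(h_n)` are densities with
`sup_x |H_n(x) − G₀(x)| → 0`, `η_n ∈ (0,1/2)`, `η_n → 0` and `√2·H(h_n, g₀) ≤ η_n/2`, then
`H_n⁻¹(1−η_n) → G₀⁻¹(1)` and `H_n⁻¹(η_n) → G₀⁻¹(0)` in the extended real line. -/
theorem truncation_quantiles_tendsto_support_endpoints
    (g₀ : ℝ → ℝ) (hg₀ : IsProbDensity g₀) (hlc : IsLogConcave g₀)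
    (h : ℕ → ℝ → ℝ) (hh : ∀ n, IsProbDensity (h n))
    (hunif : Tendsto (fun n => ⨆ x : ℝ, |cdfOf (h n) x - cdfOf g₀ x|) atTop (nhds 0))
    (η : ℕ → ℝ) (hη : ∀ n, 0 < η n ∧ η n < 1 / 2) (hη0 : Tendsto η atTop (nhds 0))
    (hhell : ∀ n, Real.sqrt 2 * hellingerDist (h n) g₀ ≤ η n / 2) :
    Tendsto (fun n => ((quantile (cdfOf (h n)) (1 - η n) : ℝ) : EReal)) atTop
        (nhds (sSup (Real.toEReal '' {x : ℝ | cdfOf g₀ x < 1}))) ∧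
      Tendsto (fun n => ((quantile (cdfOf (h n)) (η n) : ℝ) : EReal)) atTop
        (nhds (sInf (Real.toEReal '' {x : ℝ | 0 < cdfOf g₀ x}))) :=
  truncation_quantiles_tendsto_support_endpoints_general g₀ hg₀ h hh η hη hη0 hhell

end
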